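/- arXiv:1202.0275 — 2 statements merged into one kernel-verified Lean document; each statement's English description precedes it below -/
import Mathlib

section
/- Generalized Fredholm inversion: if K ∈ CF(W × X) and K' ∈ CF(X × W) satisfy ∫_X K(w,x) K'(x,w') dχ(x) = (μ − λ) δ_{w=w'} + λ for all w, w' ∈ W, then for all h ∈ CF(W), (R_{K'} ∘ R_K) h = (μ − λ) h + λ (∫_W h dχ) 1_W. -/
open Classical

/-! Exchanging the two Euler integrals by Fubini turns `R_{K'} (R_K h) (w')` into the integral
of `h` against the composite kernel `∫_X K(·,x) K'(x,w') dχ(x) = (μ − λ) δ_{w'} + λ`; integrating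
`h` against `δ_{w'}` evaluates it at `w'` because a point has Euler characteristic `1`. -/

section EulerIntegral

variable {W : Type*} {IW : (W → ℤ) → ℤ}

theorem integral_ite_eq_of_indicator {χW : Set W → ℤ}
    (hWsmul : ∀ (c : ℤ) (f : W → ℤ), IW (c • f) = c * IW f)
    (hWind : ∀ A : Set W, IW (A.indicator 1) = χW A) (hpt : ∀ w : W, χW {w} = 1)
    (w' : W) (c : ℤ) :
    IW (fun w => if w = w' then c else 0) = c := by
  have hdelta : (fun w => if w = w' then c else 0) = c • ({w'} : Set W).indicator 1 := by
    funext w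
    by_cases hw : w = w' <;> simp [hw]
  rw [hdelta, hWsmul, hWind, hpt, mul_one]

theorem integral_mul_delta_add_const {χW : Set W → ℤ}
    (hWadd : ∀ f g : W → ℤ, IW (f + g) = IW f + IW g)
    (hWsmul : ∀ (c : ℤ) (f : W → ℤ), IW (c • f) = c * IW f)
    (hWind : ∀ A : Set W, IW (A.indicator 1) = χW A) (hpt : ∀ w : W, χW {w} = 1)
    (h : W → ℤ) (w' : W) (a lam : ℤ) :
    IW (fun w => h w * ((if w = w' then a else 0) + lam)) = a * h w' + lam * IW h := by
  have hsplit : (fun w => h w * ((if w = w' then a else 0) + lam))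
      = (fun w => if w = w' then a * h w' else 0) + lam • h := by
    funext w
    by_cases hw : w = w' <;> simp [hw] <;> ring
  rw [hsplit, hWadd, hWsmul, integral_ite_eq_of_indicator hWsmul hWind hpt]

end EulerIntegral

theorem radon_comp_eq_integral_composite_kernel {W X : Type*}
    {IW : (W → ℤ) → ℤ} {IX : (X → ℤ) → ℤ}
    (hWsmul : ∀ (c : ℤ) (f : W → ℤ), IW (c • f) = c * IW f)
    (hXsmul : ∀ (c : ℤ) (f : X → ℤ), IX (c • f) = c * IX f)
    (hswap : ∀ k : W → X → ℤ,
        IX (fun x => IW (fun w => k w x)) = IW (fun w => IX (fun x => k w x)))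
    (K : W → X → ℤ) (K' : X → W → ℤ) (h : W → ℤ) (w' : W) :
    IX (fun x => IW (fun w => h w * K w x) * K' x w')
      = IW (fun w => h w * IX (fun x => K w x * K' x w')) := by
  have hinner (x : X) : IW (fun w => h w * K w x) * K' x w'
      = IW (fun w => h w * K w x * K' x w') := by
    rw [mul_comm, ← hWsmul]
    congr 1
    funext w
    simp only [Pi.smul_apply, smul_eq_mul]
    ring
  have houter (w : W) : IX (fun x => h w * K w x * K' x w')
      = h w * IX (fun x => K w x * K' x w') := by
    rw [← hXsmul]
    congr 1
    funext x
    simp only [Pi.smul_apply, smul_eq_mul]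
    ring
  simp only [hinner, hswap (fun w x => h w * K w x * K' x w'), houter]

theorem fredholm_inversion_general {W X : Type*}
    (χW : Set W → ℤ)
    (IW : (W → ℤ) → ℤ) (IX : (X → ℤ) → ℤ)
    (hWadd : ∀ f g : W → ℤ, IW (f + g) = IW f + IW g)
    (hWsmul : ∀ (c : ℤ) (f : W → ℤ), IW (c • f) = c * IW f)
    (hWind : ∀ A : Set W, IW (A.indicator 1) = χW A)
    (hXsmul : ∀ (c : ℤ) (f : X → ℤ), IX (c • f) = c * IX f)
    (hswap : ∀ k : W → X → ℤ,
        IX (fun x => IW (fun w => k w x)) = IW (fun w => IX (fun x => k w x)))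
    (hpt : ∀ w : W, χW {w} = 1)
    (K : W → X → ℤ) (K' : X → W → ℤ) (μ lam : ℤ)
    (hKK' : ∀ w w' : W,
        IX (fun x => K w x * K' x w') = (if w = w' then μ - lam else 0) + lam)
    (h : W → ℤ) :
    ∀ w' : W,
      IX (fun x => (IW (fun w => h w * K w x)) * K' x w')
        = (μ - lam) * h w' + lam * IW h := by
  intro w'
  rw [radon_comp_eq_integral_composite_kernel hWsmul hXsmul hswap]
  simp only [hKK']
  exact integral_mul_delta_add_const hWadd hWsmul hWind hpt h w' (μ - lam) lam

/-- Generalized Fredholm inversion for weighted Radon transforms: if the constructible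
kernels `K ∈ CF(W × X)` and `K' ∈ CF(X × W)` satisfy
`∫_X K(w,x) K'(x,w') dχ(x) = (μ − λ)·δ_{w=w'} + λ` for all `w, w' ∈ W`, then for all
constructible `h` on `W`, `(R_{K'} ∘ R_K) h = (μ − λ)·h + λ·(∫_W h dχ)·1_W`, where
`(R_K h)(x) = ∫_W h(w) K(w,x) dχ(w)` and `(R_{K'} g)(w') = ∫_X g(x) K'(x,w') dχ(x)`.
`IW`, `IX` are the Euler integrals: `ℤ`-linear extensions of the Euler characteristics
(points have `χW = 1`), satisfying the Fubini interchange `hswap` on `W × X`. -/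
theorem fredholm_inversion {W X : Type*}
    (χW : Set W → ℤ)
    (IW : (W → ℤ) → ℤ) (IX : (X → ℤ) → ℤ)
    (hWadd : ∀ f g : W → ℤ, IW (f + g) = IW f + IW g)
    (hWsmul : ∀ (c : ℤ) (f : W → ℤ), IW (c • f) = c * IW f)
    (hWind : ∀ A : Set W, IW (A.indicator 1) = χW A)
    (hXadd : ∀ f g : X → ℤ, IX (f + g) = IX f + IX g)
    (hXsmul : ∀ (c : ℤ) (f : X → ℤ), IX (c • f) = c * IX f)
    (hswap : ∀ k : W → X → ℤ,
        IX (fun x => IW (fun w => k w x)) = IW (fun w => IX (fun x => k w x)))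
    (hpt : ∀ w : W, χW {w} = 1)
    (K : W → X → ℤ) (K' : X → W → ℤ) (μ lam : ℤ)
    (hKK' : ∀ w w' : W,
        IX (fun x => K w x * K' x w') = (if w = w' then μ - lam else 0) + lam)
    (h : W → ℤ) :
    ∀ w' : W,
      IX (fun x => (IW (fun w => h w * K w x)) * K' x w')
        = (μ - lam) * h w' + lam * IW h :=
  fredholm_inversion_general χW IW IX hWadd hWsmul hWind hXsmul hswap hpt K K' μ lam hKK' h
end

section
/- For an affine function h on an open k-simplex σ, the lower Euler integral equals (−1)^k inf_σ h and the upper Euler integral equals (−1)^k sup_σ h. -/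
/-!
On `σ` the integer function `⌊n h⌋` takes values between `L = ⌊n inf h⌋` and `M = ⌊n sup h⌋`, so
by the layer-cake formula it equals `M • 1_σ` minus the indicators of the sublevel sets
`{⌊n h⌋ ≤ c} = {h < (c + 1) / n}`, `L ≤ c < M`. Each of these is a nonempty open slice of `σ`,
of Euler characteristic `(-1)^k`, as is `σ` itself; hence `∫_σ ⌊n h⌋ dχ = (-1)^k ⌊n inf h⌋`, and
`⌊n a⌋ / n → a`. The upper integral follows by applying this to `-h`, as `⌈n h⌉ = -⌊-n h⌋`.
-/

open Classical Filter

section LayerCake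

variable {α : Type*} {s : Set α} {g : α → ℤ} {L M : ℤ}

theorem Set.indicator_eq_sub_sum_indicator_le (hg : ∀ x ∈ s, g x ∈ Set.Icc L M) :
    s.indicator g = M • s.indicator 1 - ∑ c ∈ Finset.Ico L M, {x ∈ s | g x ≤ c}.indicator 1 := by
  ext x
  by_cases hx : x ∈ s
  · have hcount : ∑ c ∈ Finset.Ico L M, {x ∈ s | g x ≤ c}.indicator (1 : α → ℤ) x = M - g x := by
      simp only [Set.indicator_apply, Set.mem_ofPred_eq, hx, true_and, Pi.one_apply]
      rw [Finset.sum_boole, Finset.Ico_filter_le, Int.card_Ico, max_eq_right (hg x hx).1,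
        Int.toNat_of_nonneg (sub_nonneg.2 (hg x hx).2)]
    simp [Finset.sum_apply, hx, hcount]
  · simp [Finset.sum_apply, Set.indicator_of_notMem, hx]

theorem AddMonoidHom.map_indicator_eq_mul_of_sublevel (I : (α → ℤ) →+ ℤ) {e : ℤ}
    (hg : ∀ x ∈ s, g x ∈ Set.Icc L M) (hLM : L ≤ M) (hs : I (s.indicator 1) = e)
    (hsub : ∀ c ∈ Finset.Ico L M, I ({x ∈ s | g x ≤ c}.indicator 1) = e) :
    I (s.indicator g) = L * e := by
  rw [Set.indicator_eq_sub_sum_indicator_le hg, map_sub, map_zsmul, map_sum, hs,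
    Finset.sum_congr rfl hsub, Finset.sum_const, Int.card_Ico, smul_eq_mul, nsmul_eq_mul,
    Int.toNat_of_nonneg (sub_nonneg.2 hLM)]
  ring

end LayerCake

section LevelSets

variable {α : Type*} {s : Set α} {f : α → ℝ} {e : ℤ} {t : ℝ}

theorem AddMonoidHom.map_indicator_floor_mul (I : (α → ℤ) →+ ℤ) (hne : s.Nonempty)
    (hbddB : BddBelow (f '' s)) (hbddA : BddAbove (f '' s))
    (hlower : ∀ c : ℝ, {x ∈ s | f x < c}.Nonempty → I ({x ∈ s | f x < c}.indicator 1) = e)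
    (ht : 0 < t) :
    I (s.indicator fun x => ⌊t * f x⌋) = ⌊t * sInf (f '' s)⌋ * e := by
  set a := sInf (f '' s)
  set b := sSup (f '' s)
  have hfa : ∀ x ∈ s, a ≤ f x := fun x hx => csInf_le hbddB (Set.mem_image_of_mem f hx)
  have hfb : ∀ x ∈ s, f x ≤ b := fun x hx => le_csSup hbddA (Set.mem_image_of_mem f hx)
  have hlevel (c : ℤ) : {x ∈ s | ⌊t * f x⌋ ≤ c} = {x ∈ s | f x < (c + 1) / t} := by
    ext x
    simp only [Set.mem_ofPred_eq, Int.floor_le_iff, lt_div_iff₀ ht, mul_comm]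
  have hs : {x ∈ s | f x < b + 1} = s := Set.sep_eq_self_iff_mem_true.2 fun x hx => by
    linarith [hfb x hx]
  have hmono {u w : ℝ} (huw : u ≤ w) : ⌊t * u⌋ ≤ ⌊t * w⌋ :=
    Int.floor_mono (mul_le_mul_of_nonneg_left huw ht.le)
  refine I.map_indicator_eq_mul_of_sublevel (M := ⌊t * b⌋)
    (fun x hx => ⟨hmono (hfa x hx), hmono (hfb x hx)⟩)
    (hmono (csInf_le_csSup (hne.image f) hbddB hbddA)) ?_ ?_
  · rw [← hs]
    exact hlower _ (hs.symm ▸ hne)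
  · intro c hc
    rw [hlevel]
    refine hlower _ ?_
    have hac : a < (c + 1) / t := by
      rw [lt_div_iff₀ ht, mul_comm]
      exact Int.floor_le_iff.1 (Finset.mem_Ico.1 hc).1
    obtain ⟨_, ⟨x, hx, rfl⟩, hxc⟩ := exists_lt_of_csInf_lt (hne.image f) hac
    exact ⟨x, hx, hxc⟩

theorem AddMonoidHom.map_indicator_ceil_mul (I : (α → ℤ) →+ ℤ) (hne : s.Nonempty)
    (hbddB : BddBelow (f '' s)) (hbddA : BddAbove (f '' s))
    (hupper : ∀ c : ℝ, {x ∈ s | c < f x}.Nonempty → I ({x ∈ s | c < f x}.indicator 1) = e)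
    (ht : 0 < t) :
    I (s.indicator fun x => ⌈t * f x⌉) = ⌈t * sSup (f '' s)⌉ * e := by
  have himage : (fun x => -f x) '' s = -(f '' s) := by
    rw [← Set.image_neg_eq_neg, Set.image_image]
  have hlower : ∀ c : ℝ, {x ∈ s | -f x < c}.Nonempty →
      I ({x ∈ s | -f x < c}.indicator 1) = e := by
    simpa only [neg_lt] using fun c => hupper (-c)
  have hfloor := I.map_indicator_floor_mul hne (by rwa [himage, bddBelow_neg])
    (by rwa [himage, bddAbove_neg]) hlower ht
  have hceil : (s.indicator fun x => ⌈t * f x⌉) = -s.indicator fun x => ⌊t * -f x⌋ := by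
    rw [← Set.indicator_neg']
    congr 1
    ext x
    rw [Pi.neg_apply, mul_neg, Int.floor_neg, neg_neg]
  rw [hceil, map_neg, hfloor, himage, Real.sInf_neg, mul_neg, Int.floor_neg]
  ring

end LevelSets

section FloorLimits

open Topology

variable {R : Type*} [TopologicalSpace R] [Field R] [LinearOrder R] [IsStrictOrderedRing R]
  [OrderTopology R] [FloorRing R]

theorem tendsto_floor_mul_div_atTop (a : R) :
    Tendsto (fun x => (⌊x * a⌋ : R) / x) atTop (𝓝 a) := by
  have hlow : Tendsto (fun x : R => a - x⁻¹) atTop (𝓝 a) := by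
    simpa using tendsto_const_nhds.sub (tendsto_inv_atTop_zero : Tendsto (·⁻¹ : R → R) atTop (𝓝 0))
  refine tendsto_of_tendsto_of_tendsto_of_le_of_le' hlow tendsto_const_nhds ?_ ?_
  · filter_upwards [eventually_gt_atTop 0] with x hx
    rw [le_div_iff₀ hx, sub_mul, inv_mul_cancel₀ hx.ne', mul_comm]
    linarith [Int.lt_floor_add_one (x * a)]
  · filter_upwards [eventually_gt_atTop 0] with x hx
    rw [div_le_iff₀ hx, mul_comm]
    exact Int.floor_le _

theorem tendsto_ceil_mul_div_atTop (a : R) :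
    Tendsto (fun x => (⌈x * a⌉ : R) / x) atTop (𝓝 a) := by
  have h := (tendsto_floor_mul_div_atTop (-a)).neg
  rw [neg_neg] at h
  refine h.congr fun x => ?_
  rw [mul_neg, Int.floor_neg, Int.cast_neg, neg_div, neg_neg]

end FloorLimits

section OpenSimplex

variable {ι E : Type*} [Fintype ι] [AddCommGroup E] [Module ℝ E]

def openSimplex (v : ι → E) : Set E :=
  {x | ∃ w : ι → ℝ, (∀ i, 0 < w i) ∧ ∑ i, w i = 1 ∧ ∑ i, w i • v i = x}

theorem openSimplex_subset_convexHull (v : ι → E) :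
    openSimplex v ⊆ convexHull ℝ (Set.range v) := by
  rintro x ⟨w, hw, hw1, rfl⟩
  exact (convex_convexHull ℝ _).sum_mem (fun i _ => (hw i).le) hw1
    fun i _ => subset_convexHull ℝ _ (Set.mem_range_self i)

theorem openSimplex_nonempty [Nonempty ι] (v : ι → E) : (openSimplex v).Nonempty :=
  ⟨_, fun _ => (Fintype.card ι : ℝ)⁻¹, fun _ => by positivity, by simp, rfl⟩

variable [TopologicalSpace E] [IsTopologicalAddGroup E] [ContinuousSMul ℝ E] {f : E → ℝ}

theorem Continuous.bddBelow_image_openSimplex (hf : Continuous f) (v : ι → E) :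
    BddBelow (f '' openSimplex v) :=
  (((Set.finite_range v).isCompact_convexHull ℝ).bddBelow_image hf.continuousOn).mono
    (Set.image_mono (openSimplex_subset_convexHull v))

theorem Continuous.bddAbove_image_openSimplex (hf : Continuous f) (v : ι → E) :
    BddAbove (f '' openSimplex v) :=
  (((Set.finite_range v).isCompact_convexHull ℝ).bddAbove_image hf.continuousOn).mono
    (Set.image_mono (openSimplex_subset_convexHull v))

end OpenSimplex

theorem affine_simplex_euler_integral_general (m k : ℕ)
    (v : Fin (k + 1) → (Fin m → ℝ))
    (σ : Set (Fin m → ℝ))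
    (hσ : σ = {x | ∃ w : Fin (k + 1) → ℝ,
        (∀ i, 0 < w i) ∧ (∑ i, w i) = 1 ∧ (∑ i, w i • v i) = x})
    (f : (Fin m → ℝ) →ᵃ[ℝ] ℝ)
    (χ : Set (Fin m → ℝ) → ℤ)
    (hupper : ∀ c : ℝ, ({x ∈ σ | c < f x}).Nonempty → χ {x ∈ σ | c < f x} = (-1 : ℤ) ^ k)
    (hlower : ∀ c : ℝ, ({x ∈ σ | f x < c}).Nonempty → χ {x ∈ σ | f x < c} = (-1 : ℤ) ^ k)
    (I : ((Fin m → ℝ) → ℤ) → ℤ)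
    (hIadd : ∀ g₁ g₂ : (Fin m → ℝ) → ℤ, I (g₁ + g₂) = I g₁ + I g₂)
    (hIind : ∀ A : Set (Fin m → ℝ), I (A.indicator 1) = χ A) :
    Tendsto (fun n : ℕ => (I (fun x => if x ∈ σ then ⌊(n : ℝ) * f x⌋ else 0) : ℝ) / n)
      atTop (nhds ((-1 : ℝ) ^ k * sInf (f '' σ)))
    ∧ Tendsto (fun n : ℕ => (I (fun x => if x ∈ σ then ⌈(n : ℝ) * f x⌉ else 0) : ℝ) / n)
      atTop (nhds ((-1 : ℝ) ^ k * sSup (f '' σ))) := by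
  replace hσ : σ = openSimplex v := hσ
  subst hσ
  have hne := openSimplex_nonempty v
  have hf : Continuous f := f.continuous_of_finiteDimensional
  have hbddB := hf.bddBelow_image_openSimplex v
  have hbddA := hf.bddAbove_image_openSimplex v
  let J : ((Fin m → ℝ) → ℤ) →+ ℤ := AddMonoidHom.mk' I hIadd
  have hfloor (n : ℕ) (hn : 0 < n) := J.map_indicator_floor_mul hne hbddB hbddA
    (fun c hc => (hIind _).trans (hlower c hc)) (t := n) (by positivity)
  have hceil (n : ℕ) (hn : 0 < n) := J.map_indicator_ceil_mul hne hbddB hbddA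
    (fun c hc => (hIind _).trans (hupper c hc)) (t := n) (by positivity)
  constructor
  · refine (((tendsto_floor_mul_div_atTop _).comp tendsto_natCast_atTop_atTop).const_mul
      ((-1 : ℝ) ^ k)).congr' ?_
    filter_upwards [eventually_gt_atTop 0] with n hn
    change _ = ((J (Set.indicator _ _) : ℤ) : ℝ) / n
    rw [Function.comp_apply, hfloor n hn]
    push_cast
    ring
  · refine (((tendsto_ceil_mul_div_atTop _).comp tendsto_natCast_atTop_atTop).const_mul
      ((-1 : ℝ) ^ k)).congr' ?_
    filter_upwards [eventually_gt_atTop 0] with n hn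
    change _ = ((J (Set.indicator _ _) : ℤ) : ℝ) / n
    rw [Function.comp_apply, hceil n hn]
    push_cast
    ring

/-- For an affine function `h = f|_σ` on an open `k`-simplex `σ` (the set of strictly
positive barycentric combinations of `k+1` affinely independent points in `ℝ^m`),
the lower Euler integral `∫_σ h ⌊dχ⌋ = lim_n (1/n)∫_σ ⌊n h⌋ dχ` equals
`(−1)^k inf_σ h`, and the upper Euler integral `∫_σ h ⌈dχ⌉ = lim_n (1/n)∫_σ ⌈n h⌉ dχ`
equals `(−1)^k sup_σ h`.  Here `χ` is the (finitely additive) definable Euler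
characteristic, for which any nonempty open affine slice of `σ` is an open `k`-cell
with `χ = (−1)^k`, and `I` is the Euler integral of constructible functions, the
additive extension of `χ`. -/
theorem affine_simplex_euler_integral (m k : ℕ)
    (v : Fin (k + 1) → (Fin m → ℝ)) (hv : AffineIndependent ℝ v)
    (σ : Set (Fin m → ℝ))
    (hσ : σ = {x | ∃ w : Fin (k + 1) → ℝ,
        (∀ i, 0 < w i) ∧ (∑ i, w i) = 1 ∧ (∑ i, w i • v i) = x})
    (f : (Fin m → ℝ) →ᵃ[ℝ] ℝ)
    (χ : Set (Fin m → ℝ) → ℤ)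
    (hempty : χ ∅ = 0)
    (hadd : ∀ S T : Set (Fin m → ℝ), Disjoint S T → χ (S ∪ T) = χ S + χ T)
    (hupper : ∀ c : ℝ, ({x ∈ σ | c < f x}).Nonempty → χ {x ∈ σ | c < f x} = (-1 : ℤ) ^ k)
    (hlower : ∀ c : ℝ, ({x ∈ σ | f x < c}).Nonempty → χ {x ∈ σ | f x < c} = (-1 : ℤ) ^ k)
    (I : ((Fin m → ℝ) → ℤ) → ℤ)
    (hIadd : ∀ g₁ g₂ : (Fin m → ℝ) → ℤ, I (g₁ + g₂) = I g₁ + I g₂)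
    (hIind : ∀ A : Set (Fin m → ℝ), I (A.indicator 1) = χ A) :
    Tendsto (fun n : ℕ => (I (fun x => if x ∈ σ then ⌊(n : ℝ) * f x⌋ else 0) : ℝ) / n)
      atTop (nhds ((-1 : ℝ) ^ k * sInf (f '' σ)))
    ∧ Tendsto (fun n : ℕ => (I (fun x => if x ∈ σ then ⌈(n : ℝ) * f x⌉ else 0) : ℝ) / n)
      atTop (nhds ((-1 : ℝ) ^ k * sSup (f '' σ))) :=
  affine_simplex_euler_integral_general m k v σ hσ f χ hupper hlower I hIadd hIind
end
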